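/- Propositional resolution is refutation complete for finite clause sets: if a finite set of clauses over finitely many propositional variables is unsatisfiable, then the empty clause is derivable from it by the resolution rule. -/

import Mathlib

inductive Lit (n : ℕ) : Type
  | pos (i : Fin n)
  | neg (i : Fin n)
deriving DecidableEq

abbrev Clause (n : ℕ) := Finset (Lit n)

def Lit.sat {n : ℕ} (v : Fin n → Bool) : Lit n → Prop
  | .pos i => v i = true
  | .neg i => v i = false

def satClause {n : ℕ} (v : Fin n → Bool) (C : Clause n) : Prop :=
  ∃ l ∈ C, l.sat v

def satSet {n : ℕ} (v : Fin n → Bool) (S : Set (Clause n)) : Prop :=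
  ∀ C ∈ S, satClause v C

inductive Res {n : ℕ} (S : Set (Clause n)) : Clause n → Prop
  | init {C : Clause n} : C ∈ S → Res S C
  | res {C D : Clause n} {p : Fin n} :
      Res S (C ∪ {Lit.pos p}) → Res S (D ∪ {Lit.neg p}) → Res S (C ∪ D)

/-! Semantic-tree argument. Say that a set `X` of variables *closes* `S` if every valuation
falsifies some derivable clause all of whose variables lie in `X`. Unsatisfiability says that all
variables close `S`. A variable `x` can be removed from a closing set: the clauses falsified by
`v[x ↦ true]` and by `v[x ↦ false]` either avoid `x` already, or contain `¬x` and `x` respectively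
and resolve on `x` to a clause falsified by `v`. Removing every variable leaves a derivable clause
without literals. -/

namespace Lit

variable {n : ℕ}

def var : Lit n → Fin n
  | .pos i => i
  | .neg i => i

lemma sat_update_of_var_ne {l : Lit n} {v : Fin n → Bool} {x : Fin n} {b : Bool}
    (h : l.var ≠ x) : l.sat (Function.update v x b) ↔ l.sat v := by
  cases l <;> simp_all [var, sat, Function.update_of_ne]

lemma eq_neg_of_not_sat_update_true {l : Lit n} {v : Fin n → Bool} {x : Fin n}
    (h : l.var = x) (hl : ¬ l.sat (Function.update v x true)) : l = .neg x := by
  cases l <;> simp_all [var, sat]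

lemma eq_pos_of_not_sat_update_false {l : Lit n} {v : Fin n → Bool} {x : Fin n}
    (h : l.var = x) (hl : ¬ l.sat (Function.update v x false)) : l = .pos x := by
  cases l <;> simp_all [var, sat]

end Lit

def Closes {n : ℕ} (S : Set (Clause n)) (X : Finset (Fin n)) : Prop :=
  ∀ v : Fin n → Bool, ∃ C, Res S C ∧ ∀ l ∈ C, l.var ∈ X ∧ ¬ l.sat v

namespace Closes

variable {n : ℕ} {S : Set (Clause n)} {X : Finset (Fin n)}

lemma univ_of_unsat (h : ∀ v, ¬ satSet v S) : Closes S Finset.univ := by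
  intro v
  obtain ⟨C, hC, hCv⟩ : ∃ C ∈ S, ¬ satClause v C := by simpa [satSet] using h v
  exact ⟨C, .init hC, fun l hl => ⟨Finset.mem_univ _, fun hs => hCv ⟨l, hl, hs⟩⟩⟩

lemma erase (h : Closes S X) (x : Fin n) : Closes S (X.erase x) := by
  intro v
  have avoid : ∀ (b : Bool) (l : Lit n), l.var ∈ X ∧ ¬ l.sat (Function.update v x b) →
      l.var ≠ x → l.var ∈ X.erase x ∧ ¬ l.sat v := fun b l ⟨hX, hs⟩ hx =>
    ⟨Finset.mem_erase.2 ⟨hx, hX⟩, by rwa [Lit.sat_update_of_var_ne hx] at hs⟩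
  obtain ⟨C₁, hC₁, hf₁⟩ := h (Function.update v x true)
  obtain ⟨C₀, hC₀, hf₀⟩ := h (Function.update v x false)
  by_cases hn : .neg x ∈ C₁
  · by_cases hp : .pos x ∈ C₀
    · refine ⟨C₀.erase (.pos x) ∪ C₁.erase (.neg x), ?_, fun l hl => ?_⟩
      · have r₀ : Res S (C₀.erase (.pos x) ∪ {.pos x}) := by
          rwa [Finset.union_singleton, Finset.insert_erase hp]
        have r₁ : Res S (C₁.erase (.neg x) ∪ {.neg x}) := by
          rwa [Finset.union_singleton, Finset.insert_erase hn]
        exact .res r₀ r₁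
      rcases Finset.mem_union.1 hl with hl | hl
      · obtain ⟨hne, hmem⟩ := Finset.mem_erase.1 hl
        exact avoid false l (hf₀ l hmem) fun hx =>
          hne (Lit.eq_pos_of_not_sat_update_false hx (hf₀ l hmem).2)
      · obtain ⟨hne, hmem⟩ := Finset.mem_erase.1 hl
        exact avoid true l (hf₁ l hmem) fun hx =>
          hne (Lit.eq_neg_of_not_sat_update_true hx (hf₁ l hmem).2)
    · exact ⟨C₀, hC₀, fun l hl => avoid false l (hf₀ l hl) fun hx =>
        hp (Lit.eq_pos_of_not_sat_update_false hx (hf₀ l hl).2 ▸ hl)⟩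
  · exact ⟨C₁, hC₁, fun l hl => avoid true l (hf₁ l hl) fun hx =>
      hn (Lit.eq_neg_of_not_sat_update_true hx (hf₁ l hl).2 ▸ hl)⟩

lemma empty (h : Closes S X) : Closes S ∅ := by
  induction X using Finset.induction_on with
  | empty => exact h
  | insert x X hx ih => exact ih (by simpa [Finset.erase_insert hx] using h.erase x)

lemma res_empty (h : Closes S X) : Res S ∅ := by
  obtain ⟨C, hC, hCv⟩ := h.empty (fun _ => true)
  have : C = ∅ := Finset.eq_empty_of_forall_notMem fun l hl => by simpa using (hCv l hl).1
  exact this ▸ hC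

end Closes

/-- Refutation completeness of propositional resolution for finite clause sets. -/
theorem resolution_complete (n : ℕ) (S : Finset (Clause n))
    (hunsat : ¬ ∃ v : Fin n → Bool, ∀ C ∈ S, satClause v C) :
    Res (↑S : Set (Clause n)) (∅ : Clause n) :=
  (Closes.univ_of_unsat fun v hv => hunsat ⟨v, hv⟩).res_empty
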